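/- arXiv:0811.0794 — 7 statements merged into one kernel-verified Lean document; each statement's English description precedes it below -/
import Mathlib

section
/- For every t ∈ ℝ, the automorphism Φ_t of G is almost-inner: for every x ∈ G there exists a ∈ G (depending on x) such that Φ_t(x) = a·x·a⁻¹. -/
noncomputable section

/-- The underlying set of the nilpotent Lie group `G`: `ℝ⁶`. -/
abbrev G6 : Type := ℝ × ℝ × ℝ × ℝ × ℝ × ℝ

/-- The group multiplication on `G = ℝ⁶`. -/
def gmul (p q : G6) : G6 :=
  ⟨p.1 + q.1, p.2.1 + q.2.1, p.2.2.1 + q.2.2.1, p.2.2.2.1 + q.2.2.2.1,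
   p.2.2.2.2.1 + q.2.2.2.2.1 + p.1 * q.2.2.1 + p.2.1 * q.2.2.2.1,
   p.2.2.2.2.2 + q.2.2.2.2.2 + p.1 * q.2.2.2.1⟩

/-- The identity element of `G`. -/
def gid : G6 := ⟨0, 0, 0, 0, 0, 0⟩

/-- The inverse in `G`. -/
def ginv (p : G6) : G6 :=
  ⟨-p.1, -p.2.1, -p.2.2.1, -p.2.2.2.1,
   -p.2.2.2.2.1 + p.1 * p.2.2.1 + p.2.1 * p.2.2.2.1,
   -p.2.2.2.2.2 + p.1 * p.2.2.2.1⟩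

/-- Membership in the integer lattice `Γ = ℤ⁶ ⊂ G`. -/
def inGamma (p : G6) : Prop :=
  (∃ n : ℤ, p.1 = n) ∧ (∃ n : ℤ, p.2.1 = n) ∧ (∃ n : ℤ, p.2.2.1 = n) ∧
  (∃ n : ℤ, p.2.2.2.1 = n) ∧ (∃ n : ℤ, p.2.2.2.2.1 = n) ∧ (∃ n : ℤ, p.2.2.2.2.2 = n)

/-- Left translation by `g ∈ G`. -/
def Lt (g : G6) : G6 → G6 := fun h => gmul g h

/-- The family of maps `Φ_t`. -/
def Phi (t : ℝ) (p : G6) : G6 :=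
  ⟨p.1, p.2.1, p.2.2.1, p.2.2.2.1, p.2.2.2.2.1, p.2.2.2.2.2 + t * p.2.2.2.1⟩

/-- The automorphism `φ` negating the `y` and `z` coordinates. -/
def phi0 (p : G6) : G6 :=
  ⟨p.1, p.2.1, -p.2.2.1, -p.2.2.2.1, -p.2.2.2.2.1, -p.2.2.2.2.2⟩

/-- The affine map `α`. -/
def alphaMap (p : G6) : G6 :=
  ⟨p.1, p.2.1, -p.2.2.1, -p.2.2.2.1, -p.2.2.2.2.1, -p.2.2.2.2.2 + 1/2⟩

/-- The affine map `β`. -/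
def betaMap (p : G6) : G6 :=
  ⟨p.1, p.2.1, p.2.2.1, p.2.2.2.1, -p.2.2.2.2.1, p.2.2.2.2.2 + 1/2⟩

/-- each `Φ_t` is almost-inner: for every `x ∈ G` there is an `a ∈ G`
(depending on `x`) with `Φ_t(x) = a·x·a⁻¹`. -/
theorem stmt6 :
    ∀ t : ℝ, ∀ x : G6, ∃ a : G6, Phi t x = gmul (gmul a x) (ginv a) := by
  intro t x
  obtain ⟨x1, x2, y1, y2, z1, z2⟩ := x
  by_cases hx1 : x1 = 0
  · by_cases hy2 : y2 = 0
    · exact ⟨⟨0, 0, 0, 0, 0, 0⟩, by simp [Phi, gmul, ginv, hx1, hy2]⟩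
    · refine ⟨⟨t, -(t * y1) / y2, 0, 0, 0, 0⟩, ?_⟩
      simp only [Phi, gmul, ginv, hx1]
      refine Prod.ext (by ring) (Prod.ext (by ring) (Prod.ext (by ring) (Prod.ext (by ring) (Prod.ext ?_ ?_))))
      · field_simp
        ring
      · ring
  · refine ⟨⟨t, 0, t * y1 / x1, 0, 0, 0⟩, ?_⟩
    simp only [Phi, gmul, ginv]
    refine Prod.ext (by ring) (Prod.ext (by ring) (Prod.ext (by ring) (Prod.ext (by ring) (Prod.ext ?_ ?_))))
    · field_simp
      ring
    · ring
end
end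

section
/- For every t ≠ 0, the automorphism Φ_t of G is not inner: there is no single element a ∈ G such that Φ_t(x) = a·x·a⁻¹ holds for all x ∈ G. -/
noncomputable section

/-- for `t ≠ 0`, `Φ_t` is not inner: no single `a ∈ G` conjugates every
`x ∈ G` to `Φ_t(x)`. -/
theorem stmt7 :
    ∀ t : ℝ, t ≠ 0 → ¬ ∃ a : G6, ∀ x : G6, Phi t x = gmul (gmul a x) (ginv a) := by
  rintro t ht ⟨a, ha⟩
  have h1 := ha (0,0,0,1,0,0)
  have h2 := ha (0,0,1,0,0,0)
  simp only [Phi, gmul, ginv, Prod.mk.injEq] at h1 h2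
  obtain ⟨-,-,-,-,-,e1⟩ := h1
  obtain ⟨-,-,-,-,e2,-⟩ := h2
  apply ht
  nlinarith [e1, e2]
end
end

section
/- For every γ ∈ Γ one has α ∘ L_γ ∘ α = L_{φ(γ)} as maps G → G, and φ(γ) ∈ Γ. Consequently the set of bijections of G of the form L_γ or α ∘ L_γ with γ ∈ Γ is closed under composition and inversion, i.e., Π = Γ ∪ αΓ is a group of transformations of G. -/
noncomputable section

/-- The set of transformations `Π = Γ ∪ αΓ` of `G`. -/
def PiSet : Set (G6 → G6) :=
  {f | ∃ γ : G6, inGamma γ ∧ (f = Lt γ ∨ f = alphaMap ∘ Lt γ)}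

/-! Write `c = (0,0,0,0,0,1/2)`. It is central, and `α = R_c ∘ φ` where `φ` is an involutive
automorphism of `G` with `φ(c) = c⁻¹`; hence `α ∘ L_γ ∘ α = L_{φ(γ)}`. Equivalently
`L_γ ∘ α = α ∘ L_{φ(γ)}`, so every composite of translations by `Γ` and `α` collapses to `L_γ` or
`α ∘ L_γ`, and `γ` stays in `Γ` because `Γ` is a subgroup stable under `φ`. -/

lemma Lt_comp_Lt (γ δ : G6) : Lt γ ∘ Lt δ = Lt (gmul γ δ) := by
  funext p
  simp only [Function.comp, Lt, gmul, Prod.mk.injEq]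
  and_intros <;> ring

lemma Lt_gid : Lt gid = id := by
  funext p
  simp [Lt, gmul, gid]

lemma gmul_ginv (γ : G6) : gmul γ (ginv γ) = gid := by
  simp only [gmul, ginv, gid, Prod.mk.injEq]
  and_intros <;> ring

lemma ginv_gmul (γ : G6) : gmul (ginv γ) γ = gid := by
  simp only [gmul, ginv, gid, Prod.mk.injEq]
  and_intros <;> ring

lemma alphaMap_comp_alphaMap : alphaMap ∘ alphaMap = id := by
  funext p
  simp [alphaMap]

lemma alphaMap_comp_Lt_comp_alphaMap (γ : G6) : alphaMap ∘ Lt γ ∘ alphaMap = Lt (phi0 γ) := by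
  funext p
  simp only [Function.comp, Lt, gmul, alphaMap, phi0, Prod.mk.injEq, true_and]
  and_intros <;> ring

lemma Lt_comp_alphaMap (γ : G6) : Lt γ ∘ alphaMap = alphaMap ∘ Lt (phi0 γ) := by
  rw [← alphaMap_comp_Lt_comp_alphaMap, ← Function.comp_assoc alphaMap alphaMap,
    alphaMap_comp_alphaMap, Function.id_comp]

lemma exists_int_eq_iff_mem_range (x : ℝ) : (∃ n : ℤ, x = n) ↔ x ∈ (Int.castRingHom ℝ).range := by
  simp only [RingHom.mem_range, eq_intCast, eq_comm]

lemma inGamma_iff (p : G6) : inGamma p ↔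
    p.1 ∈ (Int.castRingHom ℝ).range ∧ p.2.1 ∈ (Int.castRingHom ℝ).range ∧
    p.2.2.1 ∈ (Int.castRingHom ℝ).range ∧ p.2.2.2.1 ∈ (Int.castRingHom ℝ).range ∧
    p.2.2.2.2.1 ∈ (Int.castRingHom ℝ).range ∧ p.2.2.2.2.2 ∈ (Int.castRingHom ℝ).range := by
  simp only [inGamma, exists_int_eq_iff_mem_range]

lemma inGamma_phi0 {γ : G6} (hγ : inGamma γ) : inGamma (phi0 γ) := by
  obtain ⟨x₁, x₂, y₁, y₂, z₁, z₂⟩ := (inGamma_iff γ).1 hγ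
  exact (inGamma_iff _).2 ⟨x₁, x₂, neg_mem y₁, neg_mem y₂, neg_mem z₁, neg_mem z₂⟩

lemma inGamma_gmul {γ δ : G6} (hγ : inGamma γ) (hδ : inGamma δ) : inGamma (gmul γ δ) := by
  obtain ⟨x₁, x₂, y₁, y₂, z₁, z₂⟩ := (inGamma_iff γ).1 hγ
  obtain ⟨x₁', x₂', y₁', y₂', z₁', z₂'⟩ := (inGamma_iff δ).1 hδ
  exact (inGamma_iff _).2 ⟨add_mem x₁ x₁', add_mem x₂ x₂', add_mem y₁ y₁', add_mem y₂ y₂',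
    add_mem (add_mem (add_mem z₁ z₁') (mul_mem x₁ y₁')) (mul_mem x₂ y₂'),
    add_mem (add_mem z₂ z₂') (mul_mem x₁ y₂')⟩

lemma inGamma_ginv {γ : G6} (hγ : inGamma γ) : inGamma (ginv γ) := by
  obtain ⟨x₁, x₂, y₁, y₂, z₁, z₂⟩ := (inGamma_iff γ).1 hγ
  exact (inGamma_iff _).2 ⟨neg_mem x₁, neg_mem x₂, neg_mem y₁, neg_mem y₂,
    add_mem (add_mem (neg_mem z₁) (mul_mem x₁ y₁)) (mul_mem x₂ y₂),
    add_mem (neg_mem z₂) (mul_mem x₁ y₂)⟩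

lemma Lt_mem_PiSet {γ : G6} (hγ : inGamma γ) : Lt γ ∈ PiSet :=
  ⟨γ, hγ, Or.inl rfl⟩

lemma alphaMap_comp_Lt_mem_PiSet {γ : G6} (hγ : inGamma γ) : alphaMap ∘ Lt γ ∈ PiSet :=
  ⟨γ, hγ, Or.inr rfl⟩

lemma comp_Lt_mem_PiSet {f : G6 → G6} (hf : f ∈ PiSet) {δ : G6} (hδ : inGamma δ) :
    f ∘ Lt δ ∈ PiSet := by
  obtain ⟨γ, hγ, rfl | rfl⟩ := hf
  · rw [Lt_comp_Lt]
    exact Lt_mem_PiSet (inGamma_gmul hγ hδ)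
  · rw [Function.comp_assoc, Lt_comp_Lt]
    exact alphaMap_comp_Lt_mem_PiSet (inGamma_gmul hγ hδ)

lemma comp_alphaMap_mem_PiSet {f : G6 → G6} (hf : f ∈ PiSet) : f ∘ alphaMap ∈ PiSet := by
  obtain ⟨γ, hγ, rfl | rfl⟩ := hf
  · rw [Lt_comp_alphaMap]
    exact alphaMap_comp_Lt_mem_PiSet (inGamma_phi0 hγ)
  · rw [Function.comp_assoc, alphaMap_comp_Lt_comp_alphaMap]
    exact Lt_mem_PiSet (inGamma_phi0 hγ)

lemma comp_mem_PiSet {f g : G6 → G6} (hf : f ∈ PiSet) (hg : g ∈ PiSet) : f ∘ g ∈ PiSet := by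
  obtain ⟨δ, hδ, rfl | rfl⟩ := hg
  · exact comp_Lt_mem_PiSet hf hδ
  · exact comp_Lt_mem_PiSet (comp_alphaMap_mem_PiSet hf) hδ

lemma exists_inverse_mem_PiSet {f : G6 → G6} (hf : f ∈ PiSet) :
    ∃ g ∈ PiSet, f ∘ g = id ∧ g ∘ f = id := by
  obtain ⟨γ, hγ, rfl | rfl⟩ := hf
  · refine ⟨Lt (ginv γ), Lt_mem_PiSet (inGamma_ginv hγ), ?_, ?_⟩
    · rw [Lt_comp_Lt, gmul_ginv, Lt_gid]
    · rw [Lt_comp_Lt, ginv_gmul, Lt_gid]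
  · refine ⟨Lt (ginv γ) ∘ alphaMap,
      comp_alphaMap_mem_PiSet (Lt_mem_PiSet (inGamma_ginv hγ)), ?_, ?_⟩
    · show alphaMap ∘ (Lt γ ∘ Lt (ginv γ)) ∘ alphaMap = id
      rw [Lt_comp_Lt, gmul_ginv, Lt_gid, Function.id_comp, alphaMap_comp_alphaMap]
    · show Lt (ginv γ) ∘ (alphaMap ∘ alphaMap) ∘ Lt γ = id
      rw [alphaMap_comp_alphaMap, Function.id_comp, Lt_comp_Lt, ginv_gmul, Lt_gid]

/-- for `γ ∈ Γ`, `α ∘ L_γ ∘ α = L_{φ(γ)}` with `φ(γ) ∈ Γ`; consequently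
`Π = Γ ∪ αΓ` is closed under composition and inversion, i.e. it is a group of
transformations of `G`. -/
theorem stmt11 :
    (∀ γ : G6, inGamma γ →
      alphaMap ∘ Lt γ ∘ alphaMap = Lt (phi0 γ) ∧ inGamma (phi0 γ)) ∧
    (∀ f g : G6 → G6, f ∈ PiSet → g ∈ PiSet → f ∘ g ∈ PiSet) ∧
    (∀ f : G6 → G6, f ∈ PiSet → ∃ g ∈ PiSet, f ∘ g = id ∧ g ∘ f = id) :=
  ⟨fun γ hγ => ⟨alphaMap_comp_Lt_comp_alphaMap γ, inGamma_phi0 hγ⟩,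
    fun _ _ => comp_mem_PiSet, fun _ => exists_inverse_mem_PiSet⟩
end
end

section
/- A point p = (x₁,x₂,y₁,y₂,z₁,z₂) ∈ G is fixed by α ∘ L_γ for some γ ∈ Γ (i.e., there exists γ ∈ ℤ⁶ with α(γ·p) = p) if and only if y₁, y₂, z₁ ∈ (1/2)ℤ and z₂ ∈ 1/4 + (1/2)ℤ, with x₁, x₂ ∈ ℝ arbitrary. In particular, the set of points of G fixed by some non-identity element of Π = Γ ∪ αΓ is exactly {(x₁,x₂,y₁,y₂,z₁,z₂) : x₁,x₂ ∈ ℝ, y₁,y₂,z₁ ∈ (1/2)ℤ, z₂ = n/2 + 1/4 for some n ∈ ℤ}. -/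
noncomputable section

/-- The coordinate condition describing the singular set: `y₁, y₂, z₁ ∈ (1/2)ℤ` and
`z₂ ∈ 1/4 + (1/2)ℤ`, with `x₁, x₂` arbitrary. -/
def singCond (p : G6) : Prop :=
  (∃ m : ℤ, p.2.2.1 = (m : ℝ) / 2) ∧ (∃ m : ℤ, p.2.2.2.1 = (m : ℝ) / 2) ∧
  (∃ m : ℤ, p.2.2.2.2.1 = (m : ℝ) / 2) ∧ (∃ n : ℤ, p.2.2.2.2.2 = (n : ℝ) / 2 + 1/4)

/-- `p` is fixed by `α ∘ L_γ` for some `γ ∈ Γ` iff `y₁, y₂, z₁ ∈ (1/2)ℤ`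
and `z₂ ∈ 1/4 + (1/2)ℤ`; and the points fixed by some non-identity element of
`Π = Γ ∪ αΓ` are exactly those satisfying this condition. -/
theorem stmt12 :
    ∀ p : G6,
      ((∃ γ : G6, inGamma γ ∧ alphaMap (gmul γ p) = p) ↔ singCond p) ∧
      ((∃ γ : G6, inGamma γ ∧
          ((γ ≠ gid ∧ gmul γ p = p) ∨ alphaMap (gmul γ p) = p)) ↔ singCond p) := by
  intro p
  obtain ⟨x1, x2, y1, y2, z1, z2⟩ := p
  have key : (∃ γ : G6, inGamma γ ∧ alphaMap (gmul γ (x1, x2, y1, y2, z1, z2)) =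
      (x1, x2, y1, y2, z1, z2)) ↔ singCond (x1, x2, y1, y2, z1, z2) := by
    constructor
    · rintro ⟨⟨a, b, c, d, e, f⟩,
        ⟨⟨a', ha⟩, ⟨b', hb⟩, ⟨c', hc⟩, ⟨d', hd⟩, ⟨e', he⟩, ⟨f', hf⟩⟩, heq⟩
      simp only [gmul, alphaMap, Prod.mk.injEq] at heq
      obtain ⟨h1, h2, h3, h4, h5, h6⟩ := heq
      have ha0 : a = 0 := by linarith
      have hb0 : b = 0 := by linarith
      have hay : a * y1 = 0 := by rw [ha0]; ring
      have hby : b * y2 = 0 := by rw [hb0]; ring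
      have hay2 : a * y2 = 0 := by rw [ha0]; ring
      refine ⟨⟨-c', ?_⟩, ⟨-d', ?_⟩, ⟨-e', ?_⟩, ⟨-f', ?_⟩⟩ <;> push_cast
      · have hc2 : c = (c' : ℝ) := hc; linarith
      · have hd2 : d = (d' : ℝ) := hd; linarith
      · have he2 : e = (e' : ℝ) := he; linarith
      · have hf2 : f = (f' : ℝ) := hf; linarith
    · rintro ⟨⟨m1, h1⟩, ⟨m2, h2⟩, ⟨m3, h3⟩, ⟨n, h4⟩⟩
      simp only [] at h1 h2 h3 h4
      refine ⟨((0 : ℝ), (0 : ℝ), ((-m1 : ℤ) : ℝ), ((-m2 : ℤ) : ℝ),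
        ((-m3 : ℤ) : ℝ), ((-n : ℤ) : ℝ)), ⟨⟨0, by norm_num⟩, ⟨0, by norm_num⟩,
        ⟨-m1, rfl⟩, ⟨-m2, rfl⟩, ⟨-m3, rfl⟩, ⟨-n, rfl⟩⟩, ?_⟩
      simp only [gmul, alphaMap, Prod.mk.injEq]
      push_cast
      refine ⟨by ring, by ring, by rw [h1]; ring, by rw [h2]; ring,
        by rw [h3]; ring, by rw [h4]; ring⟩
  refine ⟨key, ?_⟩
  constructor
  · rintro ⟨γ, hγ, hcase⟩
    rcases hcase with ⟨hne, hfix⟩ | hfix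
    · exfalso
      obtain ⟨a, b, c, d, e, f⟩ := γ
      simp only [gmul, Prod.mk.injEq] at hfix
      obtain ⟨h1, h2, h3, h4, h5, h6⟩ := hfix
      have ha0 : a = 0 := by linarith
      have hb0 : b = 0 := by linarith
      have hc0 : c = 0 := by linarith
      have hd0 : d = 0 := by linarith
      have hay : a * y1 = 0 := by rw [ha0]; ring
      have hby : b * y2 = 0 := by rw [hb0]; ring
      have hay2 : a * y2 = 0 := by rw [ha0]; ring
      have he0 : e = 0 := by linarith
      have hf0 : f = 0 := by linarith
      exact hne (by simp [gid, ha0, hb0, hc0, hd0, he0, hf0])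
    · exact key.mp ⟨γ, hγ, hfix⟩
  · intro h
    obtain ⟨γ, hγ, hfix⟩ := key.mpr h
    exact ⟨γ, hγ, Or.inr hfix⟩
end
end

section
/- Every isotropy group of the action of Π = Γ ∪ αΓ on G has order at most 2: (i) for γ ∈ Γ, left translation L_γ fixes some point of G only if γ is the identity; and (ii) for each p ∈ G there is at most one γ ∈ Γ with α(γ·p) = p. Hence the isotropy group of any point fixed by some non-identity element of Π is isomorphic to ℤ/2ℤ. -/
noncomputable section

lemma part1 : ∀ γ : G6, inGamma γ → (∃ p : G6, gmul γ p = p) → γ = gid := by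
  rintro ⟨a,b,c,d,e,f⟩ _ ⟨⟨p1,p2,p3,p4,p5,p6⟩, hp⟩
  simp only [gmul, gid, Prod.mk.injEq] at hp ⊢
  obtain ⟨h1,h2,h3,h4,h5,h6⟩ := hp
  have ha : a = 0 := by linarith
  have hb : b = 0 := by linarith
  subst ha hb
  refine ⟨rfl, rfl, by linarith, by linarith, by linarith, by linarith⟩

lemma part2 : ∀ p γ γ' : G6, inGamma γ → inGamma γ' →
      alphaMap (gmul γ p) = p → alphaMap (gmul γ' p) = p → γ = γ' := by
  rintro ⟨p1,p2,p3,p4,p5,p6⟩ ⟨a,b,c,d,e,f⟩ ⟨a',b',c',d',e',f'⟩ _ _ h h'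
  simp only [alphaMap, gmul, Prod.mk.injEq] at h h' ⊢
  obtain ⟨h1,h2,h3,h4,h5,h6⟩ := h
  obtain ⟨g1,g2,g3,g4,g5,g6⟩ := h'
  have ha : a = 0 := by linarith
  have hb : b = 0 := by linarith
  have ha' : a' = 0 := by linarith
  have hb' : b' = 0 := by linarith
  subst ha hb ha' hb'
  refine ⟨rfl, rfl, by linarith, by linarith, by linarith, by linarith⟩

lemma gid_gamma : inGamma gid := by
  refine ⟨⟨0, ?_⟩, ⟨0, ?_⟩, ⟨0, ?_⟩, ⟨0, ?_⟩, ⟨0, ?_⟩, ⟨0, ?_⟩⟩ <;> simp [gid]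

/-- every isotropy group of the `Π`-action on `G` has order at most 2:
(i) a translation `L_γ`, `γ ∈ Γ`, with a fixed point is the identity; (ii) for each
`p` at most one `γ ∈ Γ` satisfies `α(γ·p) = p`; hence any point fixed by a
non-identity element of `Π` has isotropy group of order exactly 2 (so isomorphic
to `ℤ/2ℤ`). -/
theorem stmt13 :
    (∀ γ : G6, inGamma γ → (∃ p : G6, gmul γ p = p) → γ = gid) ∧
    (∀ p γ γ' : G6, inGamma γ → inGamma γ' →
      alphaMap (gmul γ p) = p → alphaMap (gmul γ' p) = p → γ = γ') ∧
    (∀ p : G6, (∃ γ : G6, inGamma γ ∧ alphaMap (gmul γ p) = p) →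
      Set.ncard {f : G6 → G6 | f ∈ PiSet ∧ f p = p} = 2) := by
  refine ⟨part1, part2, ?_⟩
  rintro p ⟨γ, hγ, hfix⟩
  have hset : {f : G6 → G6 | f ∈ PiSet ∧ f p = p} = {Lt gid, alphaMap ∘ Lt γ} := by
    ext f
    constructor
    · rintro ⟨⟨γ', hγ', hf | hf⟩, hfp⟩
      · left
        subst hf
        have := part1 γ' hγ' ⟨p, hfp⟩
        rw [this]
      · right
        subst hf
        have := part2 p γ' γ hγ' hγ hfp hfix
        rw [this]
        exact rfl
    · rintro (rfl | rfl)
      · exact ⟨⟨gid, gid_gamma, Or.inl rfl⟩, by rw [Lt_gid]; rfl⟩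
      · exact ⟨⟨γ, hγ, Or.inr rfl⟩, hfix⟩
  rw [hset]
  apply Set.ncard_pair
  intro hcontra
  rw [Lt_gid] at hcontra
  have h1 := congrFun hcontra ⟨p.1, p.2.1, p.2.2.1, p.2.2.2.1, p.2.2.2.2.1, p.2.2.2.2.2 + 1⟩
  have h2 : alphaMap (gmul γ p) = p := hfix
  obtain ⟨p1,p2,p3,p4,p5,p6⟩ := p
  obtain ⟨a,b,c,d,e,f⟩ := γ
  simp only [alphaMap, gmul, Lt, Function.comp, id_eq, Prod.mk.injEq] at h1 h2
  obtain ⟨_,_,_,_,_,k6⟩ := h1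
  obtain ⟨_,_,_,_,_,m6⟩ := h2
  linarith
end
end

section
/- For every t ∈ ℝ and every γ ∈ Γ there exists a ∈ G such that L_a ∘ (α ∘ L_γ) ∘ L_{a⁻¹} = α ∘ L_{Φ_t(γ)} as maps G → G; that is, for all p ∈ G, a·α(γ·(a⁻¹·p)) = α(Φ_t(γ)·p). (Together with the almost-inner property of Φ_t on Γ, this expresses that the extension Φ̃_t of Φ_t is an almost-inner automorphism of ΠG relative to Π.) -/
noncomputable section

/-- for every `t ∈ ℝ` and `γ ∈ Γ` there is `a ∈ G` with
`L_a ∘ (α ∘ L_γ) ∘ L_{a⁻¹} = α ∘ L_{Φ_t(γ)}` as maps `G → G`. -/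
theorem stmt14 :
    ∀ t : ℝ, ∀ γ : G6, inGamma γ → ∃ a : G6, ∀ p : G6,
      gmul a (alphaMap (gmul γ (gmul (ginv a) p))) = alphaMap (gmul (Phi t γ) p) := by
  intro t γ _
  refine ⟨⟨0, 0, 0, 0, 0, -t * γ.2.2.2.1 / 2⟩, fun p => ?_⟩
  simp only [gmul, ginv, alphaMap, Phi, Prod.mk.injEq]
  refine ⟨by ring, by ring, by ring, by ring, by ring, by ring⟩
end
end

section
/- The action of Π′ = Γ ∪ βΓ on G is free: (i) for γ ∈ Γ, left translation L_γ fixes a point of G only if γ is the identity; and (ii) for every γ ∈ Γ and every p ∈ G, β(γ·p) ≠ p. In particular no point of G is fixed by any non-identity element of Π′. -/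
noncomputable section

/-- the action of `Π′ = Γ ∪ βΓ` on `G` is free: (i) a translation
`L_γ`, `γ ∈ Γ`, with a fixed point is the identity; (ii) no map `β ∘ L_γ`, `γ ∈ Γ`,
has a fixed point. -/
theorem stmt18 :
    (∀ γ : G6, inGamma γ → (∃ p : G6, gmul γ p = p) → γ = gid) ∧
    (∀ γ p : G6, inGamma γ → betaMap (gmul γ p) ≠ p) := by
  constructor
  · rintro ⟨a1,a2,a3,a4,a5,a6⟩ _ ⟨⟨p1,p2,p3,p4,p5,p6⟩, hp⟩
    simp only [gmul, gid, Prod.mk.injEq] at hp ⊢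
    obtain ⟨h1,h2,h3,h4,h5,h6⟩ := hp
    have e1 : a1 = 0 := by linarith
    have e2 : a2 = 0 := by linarith
    have e3 : a3 = 0 := by linarith
    have e4 : a4 = 0 := by linarith
    rw [e1, e2] at h5
    rw [e1] at h6
    refine ⟨e1, e2, e3, e4, by linarith, by linarith⟩
  · rintro ⟨a1,a2,a3,a4,a5,a6⟩ ⟨p1,p2,p3,p4,p5,p6⟩ hγ hp
    simp only [gmul, betaMap, Prod.mk.injEq] at hp
    obtain ⟨h1,h2,h3,h4,h5,h6⟩ := hp
    obtain ⟨_,_,_,_,_,⟨n,hn⟩⟩ := hγ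
    simp only at hn
    have e1 : a1 = 0 := by linarith
    rw [e1] at h6
    have : (n : ℝ) = -1/2 := by rw [← hn]; linarith
    have h2 : (2*n : ℤ) = -1 := by exact_mod_cast (by push_cast; linarith : ((2*n : ℤ) : ℝ) = -1)
    omega
end
end
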